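/- arXiv:1201.3174 — 5 statements merged into one kernel-verified Lean document; each statement's English description precedes it below -/
import Mathlib

section
/- In a right-angled Coxeter group C(Σ,I) defined by a finite simple graph (Σ,I) with relations a²=1 for a∈Σ and ab=ba for (a,b)∈I, if u and v are geodesic words over Σ representing the same group element, then u and v contain exactly the same set of letters. -/
/-- The defining relators of the right-angled Coxeter group `C(Σ, I)`:
`a² = 1` for every generator `a`, and `ab = ba` for every pair `(a,b) ∈ I`. -/
def racRels {S : Type*} (I : S → S → Prop) : Set (FreeGroup S) :=
  {r | ∃ a : S, r = FreeGroup.of a * FreeGroup.of a} ∪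
  {r | ∃ a b : S, I a b ∧
        r = FreeGroup.of a * FreeGroup.of b * (FreeGroup.of a)⁻¹ * (FreeGroup.of b)⁻¹}

/-- Evaluation of a word over `Σ` in the right-angled Coxeter group `C(Σ, I)`. -/
def racEval {S : Type*} (I : S → S → Prop) (w : List S) : PresentedGroup (racRels I) :=
  (w.map (fun a => PresentedGroup.of (rels := racRels I) a)).prod

/-!
Deleting all letters outside a set `T` of generators respects the relations (it sends `a²`
and `aba⁻¹b⁻¹` to themselves or to `1`), so it defines a retraction of `C(Σ, I)` onto the
subgroup generated by `T`. Take `T` to be the alphabet of `v`: the retraction fixes the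
element of `v`, hence of `u`, so deleting the letters outside `T` from `u` gives a word for the
same element. For geodesic `u` this word is not shorter, so every letter of `u` occurs in `v`.
-/

namespace RightAngledCoxeter

variable {S : Type*} (I : S → S → Prop)

def IsGeodesic (u : List S) : Prop :=
  ∀ w : List S, racEval I w = racEval I u → u.length ≤ w.length

@[simp]
theorem racEval_nil : racEval I [] = 1 := rfl

@[simp]
theorem racEval_cons (a : S) (w : List S) :
    racEval I (a :: w) = PresentedGroup.of a * racEval I w := by
  simp [racEval]

theorem of_mul_self (a : S) :
    (PresentedGroup.of a * PresentedGroup.of a : PresentedGroup (racRels I)) = 1 :=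
  PresentedGroup.one_of_mem (rels := racRels I) (Or.inl ⟨a, rfl⟩)

theorem of_commutator_eq_one {a b : S} (hab : I a b) :
    (PresentedGroup.of a * PresentedGroup.of b * (PresentedGroup.of a)⁻¹ *
      (PresentedGroup.of b)⁻¹ : PresentedGroup (racRels I)) = 1 :=
  PresentedGroup.one_of_mem (rels := racRels I) (Or.inr ⟨a, b, hab, rfl⟩)

variable (p : S → Prop) [DecidablePred p]

noncomputable def retractionGen (a : S) : PresentedGroup (racRels I) :=
  if p a then PresentedGroup.of a else 1

theorem lift_retractionGen_eq_one : ∀ r ∈ racRels I, FreeGroup.lift (retractionGen I p) r = 1 := by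
  rintro r (⟨a, rfl⟩ | ⟨a, b, hab, rfl⟩)
  · by_cases ha : p a <;> simp [retractionGen, ha, of_mul_self]
  · by_cases ha : p a <;> by_cases hb : p b <;>
      simp [retractionGen, ha, hb, of_commutator_eq_one I hab]

noncomputable def retraction : PresentedGroup (racRels I) →* PresentedGroup (racRels I) :=
  PresentedGroup.toGroup (lift_retractionGen_eq_one I p)

theorem retraction_racEval (w : List S) :
    retraction I p (racEval I w) = racEval I (w.filter (p ·)) := by
  induction w with
  | nil => simp
  | cons a w ih =>
    rw [racEval_cons, map_mul, ih, retraction, PresentedGroup.toGroup.of]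
    by_cases ha : p a <;> simp [retractionGen, ha]

theorem IsGeodesic.subset_of_racEval_eq {u v : List S} (hu : IsGeodesic I u)
    (huv : racEval I u = racEval I v) : u ⊆ v := by
  classical
  have hv : v.filter (· ∈ v) = v := List.filter_eq_self.mpr fun a ha => by simpa using ha
  have hfilter : racEval I (u.filter (· ∈ v)) = racEval I u := by
    rw [← retraction_racEval, huv, retraction_racEval, hv]
  have hlen : (u.filter (· ∈ v)).length = u.length :=
    le_antisymm (List.length_filter_le _ _) (hu _ hfilter)
  intro a ha
  simpa using List.filter_eq_self.mp (List.filter_sublist.eq_of_length hlen) a ha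

end RightAngledCoxeter

theorem racGeodesic_alphabet_eq_general {S : Type*} [DecidableEq S]
    (I : S → S → Prop)
    (u v : List S)
    (hu : ∀ w : List S, racEval I w = racEval I u → u.length ≤ w.length)
    (hv : ∀ w : List S, racEval I w = racEval I v → v.length ≤ w.length)
    (huv : racEval I u = racEval I v) :
    u.toFinset = v.toFinset := by
  have huv_sub : u ⊆ v := RightAngledCoxeter.IsGeodesic.subset_of_racEval_eq I hu huv
  have hvu_sub : v ⊆ u := RightAngledCoxeter.IsGeodesic.subset_of_racEval_eq I hv huv.symm
  ext a
  simpa only [List.mem_toFinset] using ⟨@huv_sub a, @hvu_sub a⟩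

/-- In a right-angled Coxeter group `C(Σ, I)` (with `(Σ, I)` a finite simple graph,
i.e. `I` irreflexive and symmetric), two geodesic words representing the same group
element contain exactly the same set of letters. -/
theorem racGeodesic_alphabet_eq {S : Type*} [Fintype S] [DecidableEq S]
    (I : S → S → Prop) (hirr : ∀ a, ¬ I a a) (hsym : ∀ a b, I a b → I b a)
    (u v : List S)
    (hu : ∀ w : List S, racEval I w = racEval I u → u.length ≤ w.length)
    (hv : ∀ w : List S, racEval I w = racEval I v → v.length ≤ w.length)
    (huv : racEval I u = racEval I v) :
    u.toFinset = v.toFinset :=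
  racGeodesic_alphabet_eq_general I u v hu hv huv
end

section
/- Let G be an even Coxeter group, a∈Σ a generator, and u,w geodesic words with wa = u in G. Then there exists ε∈{1,−1} with |u| = |w|+ε and |u|_a = |w|_a + ε, and |u|_b = |w|_b for all letters b ≠ a. -/
/-!
By the exchange property one of `w ++ [a]`, `u ++ [a]` is a reduced word for `u`, resp. `w`, so it
suffices that reduced words of one element contain each letter `b` equally often once every
`m(i, b)` with `i ≠ b` is even. The right inversion sequence of a reduced word has no repetitions,
and its set of entries depends only on the element: the action of `W` on `W × ZMod 2` in which a
simple reflection `s` sends `(t, e)` to `(s t s, e + [t = s])` shows that the parity of the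
multiplicity of `t` does. Finally `b` occurs in a word as often as its inversion sequence contains a
reflection on which the character `s i ↦ [i = b]` (well defined because `m(i, b)` is even) is
nontrivial.
-/

/-- The defining relators of the Coxeter group with Coxeter matrix `M`. -/
def coxRels {S : Type*} (M : S → S → ℕ) : Set (FreeGroup S) :=
  {r | ∃ i j : S, r = (FreeGroup.of i * FreeGroup.of j) ^ (M i j)}

/-- Evaluation of a word over the generating set `Σ` in the Coxeter group of `M`. -/
def coxEval {S : Type*} (M : S → S → ℕ) (w : List S) : PresentedGroup (coxRels M) :=
  (w.map (fun a => PresentedGroup.of (rels := coxRels M) a)).prod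

namespace CoxeterSystem

open List

variable {B : Type*} {W : Type*} [Group W] {M : CoxeterMatrix B} (cs : CoxeterSystem M W)

local prefix:100 "s" => cs.simple
local prefix:100 "π" => cs.wordProd

theorem isReduced_of_forall_length_le {ω : List B}
    (hω : ∀ ω' : List B, π ω' = π ω → ω.length ≤ ω'.length) : cs.IsReduced ω := by
  obtain ⟨ω', hω', h⟩ := cs.exists_isReduced (π ω)
  exact le_antisymm (cs.length_wordProd_le ω) (h ▸ hω' ▸ hω ω' h.symm)

theorem prod_map_alternatingWord {G : Type*} [Monoid G] (f : B → G) (i j : B) (k : ℕ) :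
    ((alternatingWord i j (2 * k)).map f).prod = (f i * f j) ^ k := by
  induction k with
  | zero => simp [alternatingWord]
  | succ k ih =>
    rw [Nat.mul_succ, alternatingWord_succ', alternatingWord_succ']
    simp [ih, pow_succ', mul_assoc]

theorem pow_inv_mul_simple (i j : B) (k : ℕ) :
    ((s i * s j) ^ k)⁻¹ * s j = s j * (s i * s j) ^ k := by
  have h : s j * (s i * s j) * (s j)⁻¹ = (s i * s j)⁻¹ := by simp [mul_assoc]
  rw [← inv_pow, ← h, conj_pow, inv_mul_cancel_right]

theorem rightInvSeq_alternatingWord_two_mul (i j : B) (k : ℕ) :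
    cs.rightInvSeq (alternatingWord i j (2 * k)) =
      ((range (2 * k)).map fun p => s j * (s i * s j) ^ p).reverse := by
  induction k with
  | zero => simp [alternatingWord]
  | succ k ih =>
    have hπ : π (alternatingWord i j (2 * k)) = (s i * s j) ^ k :=
      prod_map_alternatingWord _ i j k
    rw [Nat.mul_succ, alternatingWord_succ', alternatingWord_succ', range_succ, range_succ]
    simp only [Nat.even_add_one, even_two_mul, not_true, if_true, if_false,
      rightInvSeq, wordProd_cons, hπ, ih, map_append, map_cons, map_nil, reverse_append,
      reverse_cons, reverse_nil, nil_append, cons_append]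
    have key := cs.pow_inv_mul_simple i j
    refine congr_arg₂ _ ?_ (congr_arg₂ _ ?_ rfl)
    · calc _ = ((s i * s j) ^ (k + 1))⁻¹ * s j * (s i * s j) ^ k := by
            simp [pow_succ', mul_assoc]
        _ = _ := by rw [key, mul_assoc, ← pow_add]; congr 2; ring
    · rw [key, mul_assoc, ← pow_add, two_mul]

section ReflectionRepresentation

variable [DecidableEq W]

def reflectionToggle (i : B) : Equiv.Perm (W × ZMod 2) :=
  Function.Involutive.toPerm (fun p => (s i * p.1 * s i, p.2 + if p.1 = s i then 1 else 0)) <| by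
    rintro ⟨t, e⟩
    by_cases h : t = s i
    · simp [h, add_assoc, CharTwo.add_self_eq_zero]
    · simp [h, mul_assoc, mul_eq_one_iff_eq_inv, inv_simple]

theorem reflectionToggle_apply (i : B) (t : W) (e : ZMod 2) :
    cs.reflectionToggle i (t, e) = (s i * t * s i, e + if t = s i then 1 else 0) :=
  rfl

theorem prod_map_reflectionToggle_apply (ω : List B) (t : W) (e : ZMod 2) :
    (ω.map cs.reflectionToggle).prod (t, e) =
      (π ω * t * (π ω)⁻¹, e + (cs.rightInvSeq ω).count t) := by
  induction ω with
  | nil => simp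
  | cons i ω ih =>
    have hcond : π ω * t * (π ω)⁻¹ = s i ↔ (π ω)⁻¹ * s i * π ω = t := by
      constructor <;> intro h <;> rw [← h] <;> group
    simp only [map_cons, prod_cons, Equiv.Perm.mul_apply, ih, reflectionToggle_apply,
      wordProd_cons, rightInvSeq, count_cons, beq_iff_eq, hcond, mul_inv_rev, inv_simple]
    refine Prod.ext (by group) ?_
    split_ifs <;> simp [add_assoc]

theorem isLiftable_reflectionToggle : M.IsLiftable cs.reflectionToggle := by
  intro i j
  ext ⟨t, e⟩ : 1
  have hcount : ((cs.rightInvSeq (alternatingWord i j (2 * M i j))).count t : ZMod 2) = 0 := by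
    rw [rightInvSeq_alternatingWord_two_mul, count_reverse, two_mul, range_add, map_append, map_map,
      count_append]
    simp only [Function.comp_def, pow_add, cs.simple_mul_simple_pow, one_mul]
    rw [Nat.cast_add]
    exact CharTwo.add_self_eq_zero _
  have hπ : π (alternatingWord i j (2 * M i j)) = 1 :=
    (prod_map_alternatingWord _ i j _).trans (cs.simple_mul_simple_pow i j)
  rw [← prod_map_alternatingWord, prod_map_reflectionToggle_apply, hcount, hπ]
  simp

noncomputable def reflectionRep : W →* Equiv.Perm (W × ZMod 2) :=
  cs.lift ⟨cs.reflectionToggle, cs.isLiftable_reflectionToggle⟩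

theorem reflectionRep_wordProd_apply (ω : List B) (t : W) (e : ZMod 2) :
    cs.reflectionRep (π ω) (t, e) = (π ω * t * (π ω)⁻¹, e + (cs.rightInvSeq ω).count t) := by
  rw [wordProd, map_list_prod, map_map, reflectionRep]
  simp only [Function.comp_def, lift_apply_simple]
  exact cs.prod_map_reflectionToggle_apply ω t e

theorem cast_count_rightInvSeq_eq_of_wordProd_eq {ω ω' : List B} (h : π ω = π ω') (t : W) :
    ((cs.rightInvSeq ω).count t : ZMod 2) = (cs.rightInvSeq ω').count t := by
  have h' := cs.reflectionRep_wordProd_apply ω t 0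
  rw [h, cs.reflectionRep_wordProd_apply ω' t 0] at h'
  simpa using (congr_arg Prod.snd h').symm

end ReflectionRepresentation

variable {cs} in
theorem IsReduced.rightInvSeq_perm {ω ω' : List B} (hω : cs.IsReduced ω)
    (hω' : cs.IsReduced ω') (h : π ω = π ω') : (cs.rightInvSeq ω).Perm (cs.rightInvSeq ω') := by
  classical
  have mem_iff_cast_count {L : List W} (hL : L.Nodup) (t : W) :
      t ∈ L ↔ (L.count t : ZMod 2) = 1 := by
    by_cases ht : t ∈ L
    · simp [ht, hL]
    · simp [ht, count_eq_zero.mpr ht]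
  have hn := hω.nodup_rightInvSeq
  have hn' := hω'.nodup_rightInvSeq
  refine (perm_ext_iff_of_nodup hn hn').mpr fun t => ?_
  rw [mem_iff_cast_count hn, mem_iff_cast_count hn', cast_count_rightInvSeq_eq_of_wordProd_eq cs h]

variable [DecidableEq B] {b : B}

noncomputable def letterParity (hb : ∀ i, i ≠ b → Even (M i b)) : W →* Multiplicative (ZMod 2) :=
  cs.lift ⟨fun i => Multiplicative.ofAdd (if i = b then 1 else 0), by
    have sq (g : Multiplicative (ZMod 2)) : g * g = 1 := by fin_cases g <;> decide
    have pow_even {n : ℕ} (hn : Even n) (g : Multiplicative (ZMod 2)) : g ^ n = 1 := by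
      obtain ⟨c, rfl⟩ := hn
      rw [pow_add, ← mul_pow, sq, one_pow]
    intro i j
    by_cases hi : i = b <;> by_cases hj : j = b
    · rw [hi, hj, M.diagonal, pow_one, sq]
    · exact pow_even (M.symmetric i j ▸ hi ▸ hb j hj) _
    · exact pow_even (hj ▸ hb i hi) _
    · simp [hi, hj]⟩

theorem letterParity_simple (hb : ∀ i, i ≠ b → Even (M i b)) (i : B) :
    cs.letterParity hb (s i) = Multiplicative.ofAdd (if i = b then 1 else 0) :=
  cs.lift_apply_simple _ i

theorem count_eq_countP_rightInvSeq (hb : ∀ i, i ≠ b → Even (M i b)) (ω : List B) :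
    ω.count b = (cs.rightInvSeq ω).countP (fun t => cs.letterParity hb t ≠ 1) := by
  induction ω with
  | nil => rfl
  | cons i ω ih =>
    have hconj : cs.letterParity hb ((π ω)⁻¹ * s i * π ω) = cs.letterParity hb (s i) := by
      rw [map_mul, map_mul, map_inv, mul_comm, mul_inv_cancel_left]
    rw [rightInvSeq, count_cons, countP_cons, ih, hconj, letterParity_simple]
    by_cases h : i = b <;> simp [h]

variable {cs}

theorem IsReduced.count_eq_of_wordProd_eq {ω ω' : List B} (hb : ∀ i, i ≠ b → Even (M i b))
    (hω : cs.IsReduced ω) (hω' : cs.IsReduced ω') (h : π ω = π ω') : ω.count b = ω'.count b := by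
  rw [count_eq_countP_rightInvSeq cs hb, count_eq_countP_rightInvSeq cs hb]
  exact (hω.rightInvSeq_perm hω' h).countP_eq _

theorem IsReduced.length_count_of_append_singleton {w u : List B} {a : B}
    (heven : ∀ i j, i ≠ j → Even (M i j)) (hwa : cs.IsReduced (w ++ [a]))
    (hu : cs.IsReduced u) (h : π (w ++ [a]) = π u) :
    u.length = w.length + 1 ∧ u.count a = w.count a + 1 ∧ ∀ b, b ≠ a → u.count b = w.count b := by
  have hcount (b : B) := hwa.count_eq_of_wordProd_eq (fun i hi => heven i b hi) hu h
  refine ⟨?_, by simpa using (hcount a).symm,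
    fun b hb => by simpa [Ne.symm hb] using (hcount b).symm⟩
  rw [← hu.eq, ← h, hwa.eq, length_append, length_singleton]

theorem IsReduced.exists_length_count_step {u w : List B} {a : B}
    (heven : ∀ i j, i ≠ j → Even (M i j)) (hu : cs.IsReduced u) (hw : cs.IsReduced w)
    (h : π (w ++ [a]) = π u) :
    ∃ ε : ℤ, (ε = 1 ∨ ε = -1) ∧ (u.length : ℤ) = w.length + ε ∧
      (u.count a : ℤ) = w.count a + ε ∧ ∀ b, b ≠ a → u.count b = w.count b := by
  rcases cs.length_mul_simple (π w) a with hlen | hlen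
  · have hwa : cs.IsReduced (w ++ [a]) := by
      rw [IsReduced, wordProd_append, wordProd_singleton, hlen, hw.eq, length_append,
        length_singleton]
    obtain ⟨hl, ha, hb⟩ := hwa.length_count_of_append_singleton heven hu h
    exact ⟨1, .inl rfl, by omega, by omega, hb⟩
  · rw [wordProd_append, wordProd_singleton] at h
    have hua : π (u ++ [a]) = π w := by
      rw [wordProd_append, wordProd_singleton, ← h, simple_mul_simple_cancel_right]
    have hua_red : cs.IsReduced (u ++ [a]) := by
      rw [IsReduced, hua, hw.eq, length_append, length_singleton, ← hu.eq, ← h, hlen, hw.eq]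
    obtain ⟨hl, ha, hb⟩ := hua_red.length_count_of_append_singleton heven hw hua
    exact ⟨-1, .inr rfl, by omega, by omega, fun b hb' => (hb b hb').symm⟩

end CoxeterSystem

def coxMatrix {S : Type*} (M : S → S → ℕ) (hsym : ∀ i j, M i j = M j i)
    (hdiag : ∀ i j, M i j = 1 ↔ i = j) : CoxeterMatrix S where
  M := Matrix.of M
  isSymm := Matrix.IsSymm.ext fun i j => hsym j i
  diagonal i := (hdiag i i).mpr rfl
  off_diagonal i j hij h := hij ((hdiag i j).mp h)

theorem relationsSet_coxMatrix {S : Type*} (M : S → S → ℕ) (hsym : ∀ i j, M i j = M j i)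
    (hdiag : ∀ i j, M i j = 1 ↔ i = j) : (coxMatrix M hsym hdiag).relationsSet = coxRels M := by
  ext r
  simp [CoxeterMatrix.relationsSet, coxRels, CoxeterMatrix.relation, coxMatrix, eq_comm]

def coxSystem {S : Type*} (M : S → S → ℕ) (hsym : ∀ i j, M i j = M j i)
    (hdiag : ∀ i j, M i j = 1 ↔ i = j) :
    CoxeterSystem (coxMatrix M hsym hdiag) (PresentedGroup (coxRels M)) :=
  ⟨QuotientGroup.quotientMulEquivOfEq (by rw [relationsSet_coxMatrix])⟩

theorem evenCoxeter_geodesic_step_general {S : Type*} [DecidableEq S]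
    (M : S → S → ℕ)
    (hsym : ∀ i j, M i j = M j i)
    (hdiag : ∀ i j, M i j = 1 ↔ i = j)
    (heven : ∀ i j, i ≠ j → Even (M i j))
    (a : S) (u w : List S)
    (hu : ∀ x : List S, coxEval M x = coxEval M u → u.length ≤ x.length)
    (hw : ∀ x : List S, coxEval M x = coxEval M w → w.length ≤ x.length)
    (hwa : coxEval M (w ++ [a]) = coxEval M u) :
    ∃ ε : ℤ, (ε = 1 ∨ ε = -1) ∧
      (u.length : ℤ) = (w.length : ℤ) + ε ∧
      (u.count a : ℤ) = (w.count a : ℤ) + ε ∧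
      ∀ b : S, b ≠ a → u.count b = w.count b := by
  let cs := coxSystem M hsym hdiag
  have coxEval_eq_wordProd : coxEval M = cs.wordProd := rfl
  rw [coxEval_eq_wordProd] at hu hw hwa
  exact (cs.isReduced_of_forall_length_le hu).exists_length_count_step heven
    (cs.isReduced_of_forall_length_le hw) hwa

/-- In an even Coxeter group, if `u, w` are geodesic words with `w·a = u` in the group,
then there is `ε ∈ {1, -1}` with `|u| = |w| + ε`, `|u|_a = |w|_a + ε`, and
`|u|_b = |w|_b` for all letters `b ≠ a`. -/
theorem evenCoxeter_geodesic_step {S : Type*} [Fintype S] [DecidableEq S]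
    (M : S → S → ℕ)
    (hsym : ∀ i j, M i j = M j i)
    (hdiag : ∀ i j, M i j = 1 ↔ i = j)
    (heven : ∀ i j, i ≠ j → Even (M i j))
    (a : S) (u w : List S)
    (hu : ∀ x : List S, coxEval M x = coxEval M u → u.length ≤ x.length)
    (hw : ∀ x : List S, coxEval M x = coxEval M w → w.length ≤ x.length)
    (hwa : coxEval M (w ++ [a]) = coxEval M u) :
    ∃ ε : ℤ, (ε = 1 ∨ ε = -1) ∧
      (u.length : ℤ) = (w.length : ℤ) + ε ∧
      (u.count a : ℤ) = (w.count a : ℤ) + ε ∧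
      ∀ b : S, b ≠ a → u.count b = w.count b :=
  evenCoxeter_geodesic_step_general M hsym hdiag heven a u w hu hw hwa
end

section
/- Let C(Σ,I) be a right-angled Coxeter group and S_C = {a² → 1 | a ∈ Σ} the trace rewriting system on the trace monoid M(Σ,I). Then S_C is strongly confluent and length-reducing, and the set IRR(S_C) of irreducible traces (those without a factor a²) is a set of unique normal forms for C(Σ,I) of geodesic length. -/
/-- One commutation step: exchanging two adjacent independent letters. -/
def swapStep {S : Type*} (I : S → S → Prop) (u v : List S) : Prop :=
  ∃ (p s : List S) (a b : S), I a b ∧ u = p ++ a :: b :: s ∧ v = p ++ b :: a :: s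

/-- Trace equivalence: the equivalence relation on words generated by commutation steps. -/
def traceEq {S : Type*} (I : S → S → Prop) : List S → List S → Prop :=
  Relation.EqvGen (swapStep I)

/-- The setoid of trace equivalence. -/
def traceSetoid {S : Type*} (I : S → S → Prop) : Setoid (List S) :=
  Relation.EqvGen.setoid (swapStep I)

/-- The trace monoid `M(Σ, I)`: words over `Σ` up to commutation of independent letters. -/
def Trace {S : Type*} (I : S → S → Prop) : Type _ := Quotient (traceSetoid I)

/-- The trace represented by a word. -/
def mkT {S : Type*} (I : S → S → Prop) (w : List S) : Trace I :=
  Quotient.mk (traceSetoid I) w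

/-- The length of a trace (well defined since commutation preserves length). -/
def lenT {S : Type*} (I : S → S → Prop) : Trace I → ℕ :=
  Quotient.lift List.length (by
    intro u v h
    induction h with
    | rel x y hxy =>
        obtain ⟨p, s, a, b, -, hx, hy⟩ := hxy
        subst hx; subst hy; simp
    | refl x => rfl
    | symm x y _ ih => omega
    | trans x y z _ _ ih1 ih2 => omega)

/-- One step of the trace rewriting system `S_C = {a² → 1 | a ∈ Σ}`. -/
def RwC {S : Type*} (I : S → S → Prop) (x y : Trace I) : Prop :=
  ∃ (a : S) (u v : List S), x = mkT I (u ++ a :: a :: v) ∧ y = mkT I (u ++ v)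

/-- A trace is `S_C`-irreducible iff no rule applies (no factor `a²`). -/
def IrrC {S : Type*} (I : S → S → Prop) (x : Trace I) : Prop :=
  ∀ y, ¬ RwC I x y

/-!
In every word representing a trace with a factor `a a`, the two letters `a` appear as `a m a`
with every letter of `m` independent of `a`: the first `a` is a minimal letter of the trace,
and the second is a minimal letter of what remains. Comparing such a word with a second
factorisation `u' b b v'` is a short case analysis on the relative position of the two pairs:
they coincide, they overlap in a factor `a a a` (then the two reducts are equal), or they are
disjoint (then both pairs can be deleted). Strong confluence gives the Church–Rosser property,
so every trace has a unique irreducible descendant.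

For the group, `C(Σ, I)` acts on traces modulo `S_C`-equivalence, each generator by left
multiplication. Hence words with the same value in `C(Σ, I)` are `S_C`-equivalent and have the
same irreducible descendant, which is the shortest of them as `S_C` is length-reducing.
-/

open Relation

theorem List.append_cons_eq_append_cons_cases {α : Type*} {u v P Q : List α} {x c : α}
    (h : u ++ x :: v = P ++ c :: Q) :
    (∃ t, u = P ++ c :: t ∧ Q = t ++ x :: v) ∨ (P = u ∧ c = x ∧ Q = v) ∨
      (∃ t, P = u ++ x :: t ∧ v = t ++ c :: Q) := by
  rcases List.append_eq_append_iff.mp h with ⟨t, rfl, ht⟩ | ⟨t, rfl, ht⟩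
  · cases t with
    | nil => simp_all
    | cons y t => simp only [List.cons_append, List.cons.injEq] at ht; grind
  · cases t with
    | nil => simp_all
    | cons y t => simp only [List.cons_append, List.cons.injEq] at ht; grind

section RacEval

variable {S : Type*} {I : S → S → Prop}

theorem racEval_cons (a : S) (w : List S) :
    racEval I (a :: w) = PresentedGroup.of a * racEval I w := by
  simp [racEval]

theorem racEval_append (u v : List S) : racEval I (u ++ v) = racEval I u * racEval I v := by
  simp [racEval]

theorem racOf_mul_self (a : S) :
    (PresentedGroup.of a : PresentedGroup (racRels I)) * PresentedGroup.of a = 1 :=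
  PresentedGroup.one_of_mem (Or.inl ⟨a, rfl⟩)

theorem racOf_mul_comm {a b : S} (hab : I a b) :
    (PresentedGroup.of a : PresentedGroup (racRels I)) * PresentedGroup.of b =
      PresentedGroup.of b * PresentedGroup.of a :=
  PresentedGroup.mk_eq_mk_of_mul_inv_mem <| by
    rw [mul_inv_rev, ← mul_assoc]
    exact Or.inr ⟨a, b, hab, rfl⟩

end RacEval

namespace Trace

variable {S : Type*} {I : S → S → Prop}

theorem mkT_swap (p s : List S) {a b : S} (h : I a b) :
    mkT I (p ++ a :: b :: s) = mkT I (p ++ b :: a :: s) :=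
  Quotient.sound (EqvGen.rel _ _ ⟨p, s, a, b, h, rfl, rfl⟩)

theorem mkT_append_left (p : List S) {u v : List S} (h : mkT I u = mkT I v) :
    mkT I (p ++ u) = mkT I (p ++ v) := by
  have h' : traceEq I u v := Quotient.exact h
  clear h
  refine Quotient.sound ?_
  induction h' with
  | rel u v huv =>
    obtain ⟨q, s, a, b, hab, rfl, rfl⟩ := huv
    exact .rel _ _ ⟨p ++ q, s, a, b, hab, by simp, by simp⟩
  | refl => exact .refl _
  | symm _ _ _ ih => exact .symm _ _ ih
  | trans _ _ _ _ _ ih₁ ih₂ => exact .trans _ _ _ ih₁ ih₂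

theorem mkT_append_cons_eq_cons_append {P : List S} {c : S} (hP : ∀ d ∈ P, I d c)
    (Q : List S) : mkT I (P ++ c :: Q) = mkT I (c :: (P ++ Q)) := by
  induction P with
  | nil => rfl
  | cons d P ih =>
    calc mkT I (d :: (P ++ c :: Q))
        = mkT I (d :: c :: (P ++ Q)) :=
          mkT_append_left [d] (ih fun e he => hP e (List.mem_cons_of_mem d he))
      _ = mkT I (c :: d :: (P ++ Q)) := mkT_swap [] _ (hP d List.mem_cons_self)

theorem mkT_append_append_cons {m : List S} {a : S} (p : List S) (hm : ∀ d ∈ m, I d a)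
    (s : List S) : mkT I (p ++ (m ++ a :: s)) = mkT I (p ++ a :: (m ++ s)) :=
  mkT_append_left p (mkT_append_cons_eq_cons_append hm s)

def cons (a : S) : Trace I → Trace I :=
  Quotient.lift (fun w => mkT I (a :: w)) fun _ _ h => mkT_append_left [a] (Quotient.sound h)

theorem rwC_mkT (u v : List S) (a : S) : RwC I (mkT I (u ++ a :: a :: v)) (mkT I (u ++ v)) :=
  ⟨a, u, v, rfl, rfl⟩

theorem rwC_cons {x y : Trace I} (h : RwC I x y) (c : S) : RwC I (cons c x) (cons c y) := by
  obtain ⟨a, u, v, rfl, rfl⟩ := h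
  exact rwC_mkT (c :: u) v a

theorem lenT_lt_of_rwC {x y : Trace I} (h : RwC I x y) : lenT I y < lenT I x := by
  obtain ⟨a, u, v, rfl, rfl⟩ := h
  simp [lenT, mkT]

theorem rwC_of_forall_indep {m : List S} {a : S} (p : List S) (hm : ∀ d ∈ m, I d a)
    (s : List S) : RwC I (mkT I (p ++ a :: (m ++ a :: s))) (mkT I (p ++ (m ++ s))) := by
  have h := mkT_append_append_cons (p ++ [a]) hm s
  simp only [List.append_assoc, List.cons_append, List.nil_append] at h
  exact h ▸ rwC_mkT p (m ++ s) a

theorem swapStep_symm (hsym : ∀ a b, I a b → I b a) {u v : List S} (h : swapStep I u v) :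
    swapStep I v u := by
  obtain ⟨p, s, a, b, hab, rfl, rfl⟩ := h
  exact ⟨p, s, b, a, hsym a b hab, rfl, rfl⟩

theorem exists_split_of_swapStep (hsym : ∀ a b, I a b → I b a) {z z' P Q : List S} {c : S}
    (hz : swapStep I z z') (hsplit : z = P ++ c :: Q) (hP : ∀ d ∈ P, I d c) :
    ∃ P' Q', z' = P' ++ c :: Q' ∧ (∀ d ∈ P', I d c) ∧
      mkT I (P' ++ Q') = mkT I (P ++ Q) := by
  obtain ⟨A, B, x, y, hxy, rfl, rfl⟩ := hz
  rcases List.append_cons_eq_append_cons_cases hsplit with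
    ⟨t, hA, hQ⟩ | ⟨hP', hc, hQ⟩ | ⟨t, hP', ht⟩
  · subst hA hQ
    exact ⟨P, t ++ y :: x :: B, by simp, hP, by simpa using (mkT_swap (P ++ t) B hxy).symm⟩
  · subst hP' hc hQ
    refine ⟨P ++ [y], B, by simp, ?_, by simp⟩
    simp only [List.mem_append, List.mem_singleton]
    rintro d (hd | rfl)
    exacts [hP d hd, hsym _ _ hxy]
  · subst hP'
    cases t with
    | nil =>
      obtain ⟨rfl, rfl⟩ : y = c ∧ B = Q := by simpa using ht
      exact ⟨A, x :: B, by simp, fun d hd => hP d (by simp [hd]), by simp⟩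
    | cons y' t =>
      obtain ⟨rfl, rfl⟩ : y = y' ∧ B = t ++ c :: Q := by simpa using ht
      refine ⟨A ++ y :: x :: t, Q, by simp, fun d hd => hP d (by simp at hd ⊢; tauto), ?_⟩
      simpa using mkT_swap A (t ++ Q) hxy |>.symm

theorem exists_split_of_mkT_cons_eq (hsym : ∀ a b, I a b → I b a) {c : S} {w z : List S}
    (h : mkT I (c :: w) = mkT I z) :
    ∃ P Q, z = P ++ c :: Q ∧ (∀ d ∈ P, I d c) ∧ mkT I (P ++ Q) = mkT I w := by
  have : Std.Symm (swapStep I) := ⟨fun _ _ => swapStep_symm hsym⟩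
  have hz : ReflTransGen (swapStep I) (c :: w) z := by
    rw [← EqvGen.eqvGen_eq_reflTransGen]
    exact Quotient.exact h
  clear h
  induction hz with
  | refl => exact ⟨[], w, rfl, by simp, rfl⟩
  | tail _ hstep ih =>
    obtain ⟨P, Q, hsplit, hP, hPQ⟩ := ih
    obtain ⟨P', Q', hsplit', hP', hPQ'⟩ := exists_split_of_swapStep hsym hstep hsplit hP
    exact ⟨P', Q', hsplit', hP', hPQ'.trans hPQ⟩

-- A separated square of `a` in a word is a factor `a m a` with `m` independent of `a`.
theorem exists_sep_sq_of_mkT_eq (hirr : ∀ a, ¬ I a a) (hsym : ∀ a b, I a b → I b a)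
    {w u v : List S} {a : S} (h : mkT I w = mkT I (u ++ a :: a :: v)) :
    ∃ p m s, w = p ++ a :: (m ++ a :: s) ∧ (∀ d ∈ m, I d a) ∧
      mkT I (p ++ (m ++ s)) = mkT I (u ++ v) := by
  induction w generalizing u v with
  | nil => simpa [lenT, mkT] using congrArg (lenT I) h
  | cons c w ih =>
    obtain ⟨P, Q, hsplit, hP, hPQ⟩ := exists_split_of_mkT_cons_eq hsym h
    rcases List.append_cons_eq_append_cons_cases hsplit with
      ⟨t, hu, hQ⟩ | ⟨hP', hc, hQ⟩ | ⟨t, hP', ht⟩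
    · subst hu hQ
      obtain ⟨p, m, s, rfl, hm, hpms⟩ := ih (u := P ++ t) (v := v) (by simpa using hPQ.symm)
      refine ⟨c :: p, m, s, rfl, hm, ?_⟩
      calc mkT I (c :: (p ++ (m ++ s))) = mkT I (c :: (P ++ (t ++ v))) := by
            simpa using mkT_append_left [c] hpms
        _ = mkT I (P ++ c :: t ++ v) := by
            simpa using (mkT_append_cons_eq_cons_append hP (t ++ v)).symm
    · subst hP' hc hQ
      have hw : mkT I (c :: (P ++ v)) = mkT I w :=
        (mkT_append_cons_eq_cons_append hP v).symm.trans hPQ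
      obtain ⟨m, s, rfl, hm, hms⟩ := exists_split_of_mkT_cons_eq hsym hw
      exact ⟨[], m, s, rfl, hm, hms⟩
    · subst hP'
      cases t with
      | nil =>
        obtain ⟨rfl, -⟩ : a = c ∧ v = Q := by simpa using ht
        exact absurd (hP a (by simp)) (hirr a)
      | cons a' t =>
        obtain ⟨rfl, rfl⟩ : a = a' ∧ v = t ++ c :: Q := by simpa using ht
        obtain ⟨p, m, s, rfl, hm, hpms⟩ := ih (u := u) (v := t ++ Q) (by simpa using hPQ.symm)
        refine ⟨c :: p, m, s, rfl, hm, ?_⟩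
        have hut : ∀ d ∈ u ++ t, I d c := fun d hd => hP d (by simp at hd ⊢; tauto)
        calc mkT I (c :: (p ++ (m ++ s))) = mkT I (c :: (u ++ t ++ Q)) := by
              simpa using mkT_append_left [c] hpms
          _ = mkT I (u ++ (t ++ c :: Q)) := by
              simpa using (mkT_append_cons_eq_cons_append hut Q).symm

theorem sep_sq_join (hirr : ∀ a, ¬ I a a) {u v p m s : List S} {a b : S}
    (h : u ++ a :: a :: v = p ++ b :: (m ++ b :: s)) (hm : ∀ d ∈ m, I d b) :
    mkT I (u ++ v) = mkT I (p ++ (m ++ s)) ∨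
      ∃ t, RwC I (mkT I (u ++ v)) t ∧ RwC I (mkT I (p ++ (m ++ s))) t := by
  rcases List.append_cons_eq_append_cons_cases h with
    ⟨t, hu, ht⟩ | ⟨hp, hb, hms⟩ | ⟨t, hp, hv⟩
  · subst hu
    rcases List.append_cons_eq_append_cons_cases ht.symm with
      ⟨t', ht', hs⟩ | ⟨hm', hb, hs⟩ | ⟨t', hm', hv⟩
    · subst ht' hs
      refine .inr ⟨mkT I (p ++ (m ++ (t' ++ v))), ?_, ?_⟩
      · simpa using rwC_of_forall_indep p hm (t' ++ v)
      · simpa using rwC_mkT (p ++ (m ++ t')) v a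
    · subst hm' hb hs
      exact .inl (by simpa using (mkT_append_append_cons p hm v).symm)
    · subst hm'
      cases t' with
      | nil =>
        obtain ⟨rfl, -⟩ : a = b ∧ v = s := by simpa using hv
        exact absurd (hm a (by simp)) (hirr a)
      | cons a' t' =>
        obtain ⟨rfl, rfl⟩ : a = a' ∧ v = t' ++ b :: s := by simpa using hv
        have htt' : ∀ d ∈ t ++ t', I d b := fun d hd => hm d (by simp at hd ⊢; tauto)
        refine .inr ⟨mkT I (p ++ (t ++ (t' ++ s))), ?_, ?_⟩
        · simpa using rwC_of_forall_indep p htt' s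
        · simpa using rwC_mkT (p ++ t) (t' ++ s) a
  · subst hp hb
    cases m with
    | nil =>
      obtain rfl : s = v := by simpa using hms
      exact .inl rfl
    | cons d m =>
      obtain ⟨rfl, -⟩ : d = b ∧ m ++ b :: s = v := by simpa using hms
      exact absurd (hm d (by simp)) (hirr d)
  · subst hp
    cases t with
    | nil =>
      obtain ⟨rfl, rfl⟩ : a = b ∧ v = m ++ b :: s := by simpa using hv
      exact .inl (by simpa using mkT_append_append_cons u hm s)
    | cons a' t =>
      obtain ⟨rfl, rfl⟩ : a = a' ∧ v = t ++ b :: (m ++ b :: s) := by simpa using hv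
      refine .inr ⟨mkT I (u ++ (t ++ (m ++ s))), ?_, ?_⟩
      · simpa using rwC_of_forall_indep (u ++ t) hm s
      · simpa using rwC_mkT u (t ++ (m ++ s)) a

theorem rwC_strongly_confluent (hirr : ∀ a, ¬ I a a) (hsym : ∀ a b, I a b → I b a)
    {x y z : Trace I} (hxy : RwC I x y) (hxz : RwC I x z) :
    y = z ∨ ∃ w, RwC I y w ∧ RwC I z w := by
  obtain ⟨a, u, v, rfl, rfl⟩ := hxy
  obtain ⟨b, u', v', hx, rfl⟩ := hxz
  obtain ⟨p, m, s, hsplit, hm, hpms⟩ := exists_sep_sq_of_mkT_eq hirr hsym hx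
  simpa only [hpms] using sep_sq_join hirr hsplit hm

theorem rwC_join_of_eqvGen (hirr : ∀ a, ¬ I a a) (hsym : ∀ a b, I a b → I b a)
    {x y : Trace I} (h : EqvGen (RwC I) x y) : Join (ReflTransGen (RwC I)) x y := by
  have hconf : ∀ x y z, RwC I x y → RwC I x z →
      ∃ w, ReflGen (RwC I) y w ∧ ReflTransGen (RwC I) z w := by
    intro x y z hxy hxz
    rcases rwC_strongly_confluent hirr hsym hxy hxz with rfl | ⟨w, hyw, hzw⟩
    exacts [⟨y, .refl, .refl⟩, ⟨w, .single hyw, .single hzw⟩]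
  have := (equivalence_join_reflTransGen hconf).isEquiv
  exact EqvGen.eqvGen_le (fun x y hxy => ⟨y, .single hxy, .refl⟩) x y h

theorem eq_of_irrC_of_reflTransGen {x y : Trace I} (hx : IrrC I x)
    (h : ReflTransGen (RwC I) x y) : x = y := by
  rcases h.cases_head with rfl | ⟨z, hxz, -⟩
  exacts [rfl, absurd hxz (hx z)]

theorem eq_of_irrC_of_eqvGen (hirr : ∀ a, ¬ I a a) (hsym : ∀ a b, I a b → I b a)
    {x y : Trace I} (hx : IrrC I x) (hy : IrrC I y) (h : EqvGen (RwC I) x y) : x = y := by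
  obtain ⟨z, hxz, hyz⟩ := rwC_join_of_eqvGen hirr hsym h
  rw [eq_of_irrC_of_reflTransGen hx hxz, eq_of_irrC_of_reflTransGen hy hyz]

theorem lenT_le_of_reflTransGen {x y : Trace I} (h : ReflTransGen (RwC I) x y) :
    lenT I y ≤ lenT I x := by
  induction h with
  | refl => exact le_rfl
  | tail _ hyz ih => exact (lenT_lt_of_rwC hyz).le.trans ih

theorem lenT_le_of_irrC_of_eqvGen (hirr : ∀ a, ¬ I a a) (hsym : ∀ a b, I a b → I b a)
    {x y : Trace I} (hx : IrrC I x) (h : EqvGen (RwC I) x y) : lenT I x ≤ lenT I y := by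
  obtain ⟨z, hxz, hyz⟩ := rwC_join_of_eqvGen hirr hsym h
  rw [eq_of_irrC_of_reflTransGen hx hxz]
  exact lenT_le_of_reflTransGen hyz

theorem exists_irrC_reflTransGen (x : Trace I) : ∃ n, IrrC I n ∧ ReflTransGen (RwC I) x n := by
  induction x using (measure (lenT I)).wf.induction with
  | h x ih =>
    by_cases hx : IrrC I x
    · exact ⟨x, hx, .refl⟩
    · obtain ⟨y, hxy⟩ : ∃ y, RwC I x y := by simpa [IrrC] using hx
      obtain ⟨n, hn, hyn⟩ := ih y (lenT_lt_of_rwC hxy)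
      exact ⟨n, hn, .head hxy hyn⟩

def racEvalT : Trace I → PresentedGroup (racRels I) :=
  Quotient.lift (racEval I) fun u v h => by
    induction h with
    | rel u v huv =>
      obtain ⟨p, s, a, b, hab, rfl, rfl⟩ := huv
      simp only [racEval_append, racEval_cons, ← mul_assoc, racOf_mul_comm hab]
    | refl => rfl
    | symm _ _ _ ih => exact ih.symm
    | trans _ _ _ _ _ ih₁ ih₂ => exact ih₁.trans ih₂

@[simp] theorem racEvalT_mkT (w : List S) : racEvalT (mkT I w) = racEval I w := rfl

theorem racEvalT_eq_of_rwC {x y : Trace I} (h : RwC I x y) : racEvalT x = racEvalT y := by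
  obtain ⟨a, u, v, rfl, rfl⟩ := h
  simp only [racEvalT_mkT, racEval_append, racEval_cons, ← mul_assoc, racOf_mul_self, mul_one]

theorem racEvalT_eq_of_reflTransGen {x y : Trace I} (h : ReflTransGen (RwC I) x y) :
    racEvalT x = racEvalT y := by
  induction h with
  | refl => rfl
  | tail _ hyz ih => exact ih.trans (racEvalT_eq_of_rwC hyz)

def letterAct (a : S) : Quot (RwC I) → Quot (RwC I) :=
  Quot.map (cons a) fun _ _ h => rwC_cons h a

theorem letterAct_involutive (a : S) : Function.Involutive (letterAct (I := I) a) := by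
  rintro ⟨x⟩
  induction x using Quotient.inductionOn with
  | h w => exact Quot.sound (rwC_mkT [] w a)

theorem letterAct_comm {a b : S} (hab : I a b) (q : Quot (RwC I)) :
    letterAct a (letterAct b q) = letterAct b (letterAct a q) := by
  rcases q with ⟨x⟩
  induction x using Quotient.inductionOn with
  | h w => exact congrArg (Quot.mk _) (mkT_swap [] w hab)

def racAction : PresentedGroup (racRels I) →* Equiv.Perm (Quot (RwC I)) :=
  PresentedGroup.toGroup (f := fun a => (letterAct_involutive a).toPerm) <| by
    rintro r (⟨a, rfl⟩ | ⟨a, b, hab, rfl⟩) <;> ext q <;>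
      simp only [map_mul, map_inv, FreeGroup.lift_apply_of, Equiv.Perm.mul_apply,
        Equiv.Perm.coe_inv, Function.Involutive.toPerm_symm, Function.Involutive.coe_toPerm,
        Equiv.Perm.coe_one, id_eq]
    · exact letterAct_involutive a q
    · rw [letterAct_comm hab q, letterAct_involutive b, letterAct_involutive a]

theorem racAction_of (a : S) :
    racAction (PresentedGroup.of a) = (letterAct_involutive (I := I) a).toPerm :=
  PresentedGroup.toGroup.of _

theorem racAction_racEval (w : List S) :
    racAction (racEval I w) (Quot.mk _ (mkT I [])) = Quot.mk _ (mkT I w) := by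
  induction w with
  | nil => simp [racEval]
  | cons a w ih =>
    rw [racEval_cons, map_mul, Equiv.Perm.mul_apply, ih, racAction_of]
    rfl

theorem eqvGen_rwC_of_racEval_eq {u v : List S} (h : racEval I u = racEval I v) :
    EqvGen (RwC I) (mkT I u) (mkT I v) := by
  apply Quot.eqvGen_exact
  rw [← racAction_racEval u, ← racAction_racEval v, h]

end Trace

open Trace in
theorem racTraceSystem_confluent_normalForms_general {S : Type*}
    (I : S → S → Prop) (hirr : ∀ a, ¬ I a a) (hsym : ∀ a b, I a b → I b a) :
    (∀ x y : Trace I, RwC I x y → lenT I y < lenT I x) ∧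
    (∀ x y z : Trace I, RwC I x y → RwC I x z → y ≠ z →
      ∃ w : Trace I, (RwC I y w ∨ y = w) ∧ (RwC I z w ∨ z = w)) ∧
    (∀ x : Trace I, ∃! n : Trace I, IrrC I n ∧ Relation.ReflTransGen (RwC I) x n) ∧
    (∀ u v : List S, Relation.ReflTransGen (RwC I) (mkT I u) (mkT I v) →
      racEval I v = racEval I u) ∧
    (∀ u v : List S, IrrC I (mkT I u) → IrrC I (mkT I v) →
      (racEval I u = racEval I v ↔ mkT I u = mkT I v)) ∧
    (∀ u v : List S, IrrC I (mkT I u) → racEval I u = racEval I v →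
      u.length ≤ v.length) := by
  refine ⟨fun _ _ => lenT_lt_of_rwC, ?_, ?_, ?_, ?_, ?_⟩
  · intro x y z hxy hxz hyz
    obtain ⟨w, hyw, hzw⟩ := (rwC_strongly_confluent hirr hsym hxy hxz).resolve_left hyz
    exact ⟨w, .inl hyw, .inl hzw⟩
  · intro x
    obtain ⟨n, hn, hxn⟩ := exists_irrC_reflTransGen x
    refine ⟨n, ⟨hn, hxn⟩, fun m ⟨hm, hxm⟩ => eq_of_irrC_of_eqvGen hirr hsym hm hn ?_⟩
    exact (EqvGen.reflTransGen_le_eqvGen _ _ _ hxm).symm.trans _ _ _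
      (EqvGen.reflTransGen_le_eqvGen _ _ _ hxn)
  · exact fun u v h => (racEvalT_eq_of_reflTransGen h).symm
  · exact fun u v hu hv => ⟨fun h => eq_of_irrC_of_eqvGen hirr hsym hu hv
      (eqvGen_rwC_of_racEval_eq h), congrArg racEvalT⟩
  · exact fun u v hu h => lenT_le_of_irrC_of_eqvGen hirr hsym hu (eqvGen_rwC_of_racEval_eq h)

/-- The trace rewriting system `S_C = {a² → 1 | a ∈ Σ}` on `M(Σ, I)` is length-reducing
and strongly confluent, and the irreducible traces form a set of unique normal forms for
the right-angled Coxeter group `C(Σ, I)` of geodesic length: every trace reduces to a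
unique irreducible trace, rewriting preserves the group element, irreducible traces
representing the same group element are equal, and irreducible representatives have
minimal length among all words representing the same group element. -/
theorem racTraceSystem_confluent_normalForms {S : Type*} [DecidableEq S]
    (I : S → S → Prop) (hirr : ∀ a, ¬ I a a) (hsym : ∀ a b, I a b → I b a) :
    (∀ x y : Trace I, RwC I x y → lenT I y < lenT I x) ∧
    (∀ x y z : Trace I, RwC I x y → RwC I x z → y ≠ z →
      ∃ w : Trace I, (RwC I y w ∨ y = w) ∧ (RwC I z w ∨ z = w)) ∧
    (∀ x : Trace I, ∃! n : Trace I, IrrC I n ∧ Relation.ReflTransGen (RwC I) x n) ∧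
    (∀ u v : List S, Relation.ReflTransGen (RwC I) (mkT I u) (mkT I v) →
      racEval I v = racEval I u) ∧
    (∀ u v : List S, IrrC I (mkT I u) → IrrC I (mkT I v) →
      (racEval I u = racEval I v ↔ mkT I u = mkT I v)) ∧
    (∀ u v : List S, IrrC I (mkT I u) → racEval I u = racEval I v →
      u.length ≤ v.length) :=
  racTraceSystem_confluent_normalForms_general I hirr hsym
end

section
/- Let C(Σ,I) be a right-angled Coxeter group with geometric representation σ: σ_a(a)=−a, σ_a(b)=b if (a,b)∈I, σ_a(b)=b+2a if (a,b)∈D, a≠b. Let wd be a Coxeter trace (no factor c²) with d∈Σ, and write wd = u d v where ud is prime (unique maximal vertex, labeled d) and (d,v)∈I. Write σ_w(d) = Σ_b λ_b b. Then λ_b ≠ 0 iff b ∈ α(ud), and λ_b > 0 for all b ∈ α(ud). -/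
/-- A Coxeter trace: one containing no factor `a²`. -/
def CoxT {S : Type*} (I : S → S → Prop) (t : Trace I) : Prop :=
  ¬ ∃ (a : S) (p s : List S), t = mkT I (p ++ a :: a :: s)

/-- A trace is prime iff its dependence graph has a unique maximal element, equivalently
it can be written as `v · a` with the last letter `a` and the trace `v` unique. -/
def PrimeT {S : Type*} (I : S → S → Prop) (t : Trace I) : Prop :=
  ∃ (a : S) (v : List S), t = mkT I (v ++ [a]) ∧
    ∀ (a' : S) (v' : List S), t = mkT I (v' ++ [a']) → a = a' ∧ mkT I v = mkT I v'

/-- The geometric representation of the right-angled Coxeter group `C(Σ, I)` on a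
generator: `σ_a(a) = -a`, `σ_a(b) = b` for `(a,b) ∈ I`, and `σ_a(b) = b + 2a` for
dependent `b ≠ a`. -/
def racSigmaGen {S : Type*} [Fintype S] [DecidableEq S]
    (I : S → S → Prop) [∀ a b : S, Decidable (I a b)] (a : S) (v : S → ℤ) : S → ℤ :=
  fun b => if b = a then
      (- v a + 2 * ∑ c ∈ Finset.univ.filter (fun c : S => c ≠ a ∧ ¬ I a c), v c)
    else v b

/-- The geometric representation of a word `w = a₁ ⋯ aₙ`: `σ_w = σ_{a₁} ∘ ⋯ ∘ σ_{aₙ}`. -/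
def racSigma {S : Type*} [Fintype S] [DecidableEq S]
    (I : S → S → Prop) [∀ a b : S, Decidable (I a b)] (w : List S) : (S → ℤ) → (S → ℤ) :=
  w.foldr (fun a f => (racSigmaGen I a) ∘ f) id

/-- The unit basis vector of a letter `d`. -/
def unitVecZ {S : Type*} [DecidableEq S] (d : S) : S → ℤ :=
  fun b => if b = d then 1 else 0

/-!
Since the letters of `v` commute with `d` and `σ_d` is an involution, `σ_w(d) = σ_u(d)`.
Primeness of `u · d` says that every letter of `u` has a dependent letter after it, which allows
an induction on `u` from the left: prepending `a` changes only the `a`-coordinate, into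
`-λ_a + 2 Σ_{c ~ a} λ_c`. Carrying along the bound `λ_b ≤ Σ_{c ~ b} λ_c` at every non-minimal
letter `b`, the absence of a factor `a²` (so `a` is not minimal before) shows that the new
coordinate is at least `Σ_{c ~ a} λ_c > 0`, and the bound propagates.
-/

section Trace

variable {S : Type*} {I : S → S → Prop}

theorem mkT_append_append_congr (p s : List S) {u v : List S} (h : mkT I u = mkT I v) :
    mkT I (p ++ u ++ s) = mkT I (p ++ v ++ s) := by
  replace h : traceEq I u v := Quotient.exact h
  induction h with
  | rel x y hxy =>
    obtain ⟨q, r, a, b, hab, rfl, rfl⟩ := hxy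
    exact Quotient.sound (.rel _ _ ⟨p ++ q, r ++ s, a, b, hab, by simp, by simp⟩)
  | refl => rfl
  | symm _ _ _ ih => exact ih.symm
  | trans _ _ _ _ _ ih₁ ih₂ => exact ih₁.trans ih₂

theorem mkT_cons_congr (a : S) {u v : List S} (h : mkT I u = mkT I v) :
    mkT I (a :: u) = mkT I (a :: v) := by
  simpa using mkT_append_append_congr [a] [] h

theorem mkT_cons_cons_swap {a b : S} (hab : I a b) (s : List S) :
    mkT I (a :: b :: s) = mkT I (b :: a :: s) :=
  Quotient.sound (.rel _ _ ⟨[], s, a, b, hab, rfl, rfl⟩)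

theorem mkT_cons_eq_append {a : S} : ∀ {s : List S}, (∀ c ∈ s, I a c) →
    mkT I (a :: s) = mkT I (s ++ [a])
  | [], _ => rfl
  | c :: s, h => by
    rw [mkT_cons_cons_swap (h c List.mem_cons_self)]
    exact mkT_cons_congr c (mkT_cons_eq_append fun x hx => h x (List.mem_cons_of_mem c hx))

theorem coxT_of_append_right {u : List S} (v : List S) (h : CoxT I (mkT I (u ++ v))) :
    CoxT I (mkT I u) := by
  rintro ⟨c, p, s, hu⟩
  exact h ⟨c, p, s ++ v, by simpa using mkT_append_append_congr [] v hu⟩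

theorem coxT_of_cons {a : S} {u : List S} (h : CoxT I (mkT I (a :: u))) : CoxT I (mkT I u) := by
  rintro ⟨c, p, s, hu⟩
  exact h ⟨c, a :: p, s, mkT_cons_congr a hu⟩

/-- `b` labels a minimal vertex of the dependence graph of `w`. -/
def IsMinLetter (I : S → S → Prop) (w : List S) (b : S) : Prop :=
  ∃ s, mkT I w = mkT I (b :: s)

theorem isMinLetter_cons_self (a : S) (w : List S) : IsMinLetter I (a :: w) a :=
  ⟨w, rfl⟩

theorem IsMinLetter.cons_of_indep {w : List S} {a b : S} (h : IsMinLetter I w b) (hab : I a b) :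
    IsMinLetter I (a :: w) b := by
  obtain ⟨s, hs⟩ := h
  exact ⟨a :: s, (mkT_cons_congr a hs).trans (mkT_cons_cons_swap hab s)⟩

theorem not_isMinLetter_of_coxT_cons {a : S} {w : List S} (h : CoxT I (mkT I (a :: w))) :
    ¬ IsMinLetter I w a := by
  rintro ⟨s, hs⟩
  exact h ⟨a, [], s, mkT_cons_congr a hs⟩

/-- Positional form of primeness of `u · d`: no vertex of `u` is maximal in the dependence
graph of `u · d`. -/
def IsPrimeWord (I : S → S → Prop) (u : List S) (d : S) : Prop :=
  ∀ p a s, u = p ++ a :: s → ∃ c ∈ s ++ [d], ¬ I a c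

theorem IsPrimeWord.of_cons {a d : S} {u : List S} (h : IsPrimeWord I (a :: u) d) :
    IsPrimeWord I u d :=
  fun p x s hu => h (a :: p) x s (by simp [hu])

theorem isPrimeWord_of_primeT (hirr : ∀ a, ¬ I a a) {u : List S} {d : S}
    (h : PrimeT I (mkT I (u ++ [d]))) : IsPrimeWord I u d := by
  rintro p a s rfl
  by_contra! hind
  obtain ⟨_, _, _, huniq⟩ := h
  have hmoved : mkT I (p ++ a :: s ++ [d]) = mkT I (p ++ (s ++ [d]) ++ [a]) := by
    simpa using mkT_append_append_congr p [] (mkT_cons_eq_append hind)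
  have hda : d = a := (huniq d _ rfl).1.symm.trans (huniq a _ hmoved).1
  exact hirr a (hda ▸ hind d (by simp))

end Trace

section Sigma

variable {S : Type*} [Fintype S] [DecidableEq S] {I : S → S → Prop} [∀ a b : S, Decidable (I a b)]

/-- The neighbours of `a` in the Coxeter graph. -/
def adj (I : S → S → Prop) [∀ a b : S, Decidable (I a b)] (a : S) : Finset S :=
  Finset.univ.filter fun c => c ≠ a ∧ ¬ I a c

theorem mem_adj {a c : S} : c ∈ adj I a ↔ c ≠ a ∧ ¬ I a c := by
  simp [adj]

theorem racSigmaGen_apply_self (a : S) (f : S → ℤ) :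
    racSigmaGen I a f a = -f a + 2 * ∑ c ∈ adj I a, f c :=
  if_pos rfl

theorem racSigmaGen_apply_of_ne {a b : S} (f : S → ℤ) (h : b ≠ a) : racSigmaGen I a f b = f b :=
  if_neg h

theorem sum_adj_racSigmaGen {a b : S} (f : S → ℤ) (h : b ∉ adj I a) :
    ∑ c ∈ adj I a, racSigmaGen I b f c = ∑ c ∈ adj I a, f c :=
  Finset.sum_congr rfl fun _ hc => racSigmaGen_apply_of_ne f (ne_of_mem_of_not_mem hc h)

theorem racSigmaGen_eq_self {a : S} {f : S → ℤ} (h : f a = ∑ c ∈ adj I a, f c) :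
    racSigmaGen I a f = f := by
  funext b
  rcases eq_or_ne b a with rfl | hb
  · rw [racSigmaGen_apply_self, ← h]; ring
  · exact racSigmaGen_apply_of_ne f hb

theorem racSigmaGen_racSigmaGen (a : S) (f : S → ℤ) :
    racSigmaGen I a (racSigmaGen I a f) = f := by
  funext b
  rcases eq_or_ne b a with rfl | hb
  · rw [racSigmaGen_apply_self, sum_adj_racSigmaGen f (by simp [mem_adj]),
      racSigmaGen_apply_self]
    ring
  · rw [racSigmaGen_apply_of_ne _ hb, racSigmaGen_apply_of_ne _ hb]

theorem racSigmaGen_comm (hsym : ∀ a b, I a b → I b a) {a b : S} (hab : I a b) (f : S → ℤ) :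
    racSigmaGen I a (racSigmaGen I b f) = racSigmaGen I b (racSigmaGen I a f) := by
  rcases eq_or_ne a b with rfl | hne
  · rfl
  have hb : b ∉ adj I a := fun h => (mem_adj.1 h).2 hab
  have ha : a ∉ adj I b := fun h => (mem_adj.1 h).2 (hsym a b hab)
  funext x
  by_cases hxa : x = a
  · subst hxa
    rw [racSigmaGen_apply_of_ne _ hne, racSigmaGen_apply_self, racSigmaGen_apply_self,
      sum_adj_racSigmaGen f hb, racSigmaGen_apply_of_ne _ hne]
  by_cases hxb : x = b
  · subst hxb
    rw [racSigmaGen_apply_of_ne _ hne.symm, racSigmaGen_apply_self, racSigmaGen_apply_self,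
      sum_adj_racSigmaGen f ha, racSigmaGen_apply_of_ne _ hne.symm]
  simp only [racSigmaGen_apply_of_ne _ hxa, racSigmaGen_apply_of_ne _ hxb]

theorem racSigma_append (u v : List S) :
    racSigma I (u ++ v) = racSigma I u ∘ racSigma I v := by
  induction u with
  | nil => rfl
  | cons a u ih => exact congrArg (racSigmaGen I a ∘ ·) ih

theorem racSigma_eq_of_mkT_eq (hsym : ∀ a b, I a b → I b a) {u v : List S}
    (h : mkT I u = mkT I v) : racSigma I u = racSigma I v := by
  replace h : traceEq I u v := Quotient.exact h
  induction h with
  | rel x y hxy =>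
    obtain ⟨p, s, a, b, hab, rfl, rfl⟩ := hxy
    rw [racSigma_append, racSigma_append]
    congr 1
    funext f
    exact racSigmaGen_comm hsym hab _
  | refl => rfl
  | symm _ _ _ ih => exact ih.symm
  | trans _ _ _ _ _ ih₁ ih₂ => exact ih₁.trans ih₂

theorem racSigma_eq_of_mkT_append_eq (hsym : ∀ a b, I a b → I b a) {u v : List S} {d : S}
    (h : mkT I (u ++ [d]) = mkT I (v ++ [d])) : racSigma I u = racSigma I v := by
  have cancel : ∀ w, racSigma I w = racSigma I (w ++ [d]) ∘ racSigmaGen I d := fun w => by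
    funext f
    rw [racSigma_append]
    exact congrArg (racSigma I w) (racSigmaGen_racSigmaGen d f).symm
  rw [cancel u, cancel v, racSigma_eq_of_mkT_eq hsym h]

theorem racSigma_unitVecZ_of_indep (hirr : ∀ a, ¬ I a a) (hsym : ∀ a b, I a b → I b a)
    {d : S} : ∀ {v : List S}, (∀ c ∈ v, I d c) → racSigma I v (unitVecZ d) = unitVecZ d
  | [], _ => rfl
  | c :: v, h => by
    have hcd : c ≠ d := by rintro rfl; exact hirr c (h c List.mem_cons_self)
    have hd : d ∉ adj I c := fun hd => (mem_adj.1 hd).2 (hsym d c (h c List.mem_cons_self))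
    show racSigmaGen I c (racSigma I v (unitVecZ d)) = _
    rw [racSigma_unitVecZ_of_indep hirr hsym fun x hx => h x (List.mem_cons_of_mem c hx)]
    exact racSigmaGen_eq_self (by simp [hd, unitVecZ, hcd])

theorem sum_adj_le_racSigmaGen_self {a : S} {f : S → ℤ} (h : f a ≤ ∑ c ∈ adj I a, f c) :
    ∑ c ∈ adj I a, f c ≤ racSigmaGen I a f a := by
  rw [racSigmaGen_apply_self]
  linarith

theorem le_racSigmaGen {a : S} {f : S → ℤ} (h : f a ≤ ∑ c ∈ adj I a, f c) :
    f ≤ racSigmaGen I a f := by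
  intro b
  rcases eq_or_ne b a with rfl | hb
  · exact h.trans (sum_adj_le_racSigmaGen_self h)
  · exact (racSigmaGen_apply_of_ne f hb).ge

/-- The invariant of `σ_u(d)` along the word `u · d`. The bound at non-minimal letters is
what makes `σ_a` increase the `a`-coordinate when `a` is prepended without creating a
factor `a²`. -/
structure Adapted (I : S → S → Prop) [∀ a b : S, Decidable (I a b)] (w : List S) (x : S → ℤ) :
    Prop where
  pos : ∀ b ∈ w, 0 < x b
  eq_zero : ∀ b ∉ w, x b = 0
  le_sum_adj : ∀ b ∈ w, ¬ IsMinLetter I w b → x b ≤ ∑ c ∈ adj I b, x c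

theorem Adapted.nonneg {w : List S} {x : S → ℤ} (hx : Adapted I w x) (b : S) : 0 ≤ x b := by
  by_cases hb : b ∈ w
  · exact (hx.pos b hb).le
  · exact (hx.eq_zero b hb).ge

theorem adapted_singleton_unitVecZ (d : S) : Adapted I [d] (unitVecZ d) where
  pos b hb := by simp_all [unitVecZ]
  eq_zero b hb := by simp_all [unitVecZ]
  le_sum_adj b hb hmin := by
    rw [List.mem_singleton.1 hb] at hmin
    exact absurd ⟨[], rfl⟩ hmin

theorem Adapted.le_sum_adj_and_pos {w : List S} {x : S → ℤ} {a : S} (hx : Adapted I w x)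
    (hcox : CoxT I (mkT I (a :: w))) (hdep : ∃ c ∈ w, ¬ I a c) :
    x a ≤ ∑ c ∈ adj I a, x c ∧ 0 < ∑ c ∈ adj I a, x c := by
  by_cases ha : a ∈ w
  · have hle := hx.le_sum_adj a ha (not_isMinLetter_of_coxT_cons hcox)
    exact ⟨hle, (hx.pos a ha).trans_le hle⟩
  · obtain ⟨c, hc, hac⟩ := hdep
    have hcadj : c ∈ adj I a := mem_adj.2 ⟨ne_of_mem_of_not_mem hc ha, hac⟩
    refine ⟨?_, (hx.pos c hc).trans_le (Finset.single_le_sum (fun b _ => hx.nonneg b) hcadj)⟩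
    rw [hx.eq_zero a ha]
    exact Finset.sum_nonneg fun b _ => hx.nonneg b

theorem Adapted.cons (hsym : ∀ a b, I a b → I b a) {w : List S} {x : S → ℤ} {a : S}
    (hx : Adapted I w x) (hcox : CoxT I (mkT I (a :: w))) (hdep : ∃ c ∈ w, ¬ I a c) :
    Adapted I (a :: w) (racSigmaGen I a x) := by
  obtain ⟨hle, hpos⟩ := hx.le_sum_adj_and_pos hcox hdep
  have hself := sum_adj_le_racSigmaGen_self hle
  have hmono := le_racSigmaGen hle
  refine ⟨fun b hb => ?_, fun b hb => ?_, fun b hb hmin => ?_⟩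
  · rcases List.mem_cons.1 hb with rfl | hb
    · exact hpos.trans_le hself
    · exact (hx.pos b hb).trans_le (hmono b)
  · rw [racSigmaGen_apply_of_ne x (List.ne_of_not_mem_cons hb),
      hx.eq_zero b (List.not_mem_of_not_mem_cons hb)]
  · have hba : b ≠ a := by rintro rfl; exact hmin (isMinLetter_cons_self b w)
    have hbw : b ∈ w := (List.mem_cons.1 hb).resolve_left hba
    rw [racSigmaGen_apply_of_ne x hba]
    by_cases hminw : IsMinLetter I w b
    · have hab : ¬ I a b := fun hab => hmin (hminw.cons_of_indep hab)
      calc x b ≤ ∑ c ∈ adj I a, x c :=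
            Finset.single_le_sum (fun c _ => hx.nonneg c) (mem_adj.2 ⟨hba, hab⟩)
        _ ≤ racSigmaGen I a x a := hself
        _ ≤ ∑ c ∈ adj I b, racSigmaGen I a x c :=
            Finset.single_le_sum (fun c _ => (hx.nonneg c).trans (hmono c))
              (mem_adj.2 ⟨hba.symm, fun hba' => hab (hsym b a hba')⟩)
    · exact (hx.le_sum_adj b hbw hminw).trans (Finset.sum_le_sum fun c _ => hmono c)

theorem adapted_racSigma_unitVecZ (hsym : ∀ a b, I a b → I b a) {d : S} :
    ∀ {u : List S}, CoxT I (mkT I (u ++ [d])) → IsPrimeWord I u d →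
      Adapted I (u ++ [d]) (racSigma I u (unitVecZ d))
  | [], _, _ => adapted_singleton_unitVecZ d
  | a :: u, hcox, hp =>
    (adapted_racSigma_unitVecZ hsym (coxT_of_cons hcox) hp.of_cons).cons hsym hcox
      (hp [] a u rfl)

end Sigma

/-- Let `w·d` be a Coxeter trace with `w·d = u·d·v`, where `u·d` is prime and every
letter of `v` is independent of `d`. Writing `σ_w(d) = Σ_b λ_b b` in the geometric
representation of the right-angled Coxeter group `C(Σ, I)`, we have `λ_b ≠ 0` iff
`b ∈ α(u·d)`, and moreover `λ_b > 0` for all `b ∈ α(u·d)`. -/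
theorem racSigma_support_of_prime {S : Type*} [Fintype S] [DecidableEq S]
    (I : S → S → Prop) [∀ a b : S, Decidable (I a b)]
    (hirr : ∀ a, ¬ I a a) (hsym : ∀ a b, I a b → I b a)
    (w u v : List S) (d : S)
    (hcox : CoxT I (mkT I (w ++ [d])))
    (hfac : mkT I (w ++ [d]) = mkT I (u ++ d :: v))
    (hprime : PrimeT I (mkT I (u ++ [d])))
    (hind : ∀ b ∈ v, I d b) :
    ∀ b : S,
      (racSigma I w (unitVecZ d) b ≠ 0 ↔ b ∈ u ++ [d]) ∧
      (b ∈ u ++ [d] → 0 < racSigma I w (unitVecZ d) b) := by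
  have hwd : mkT I (w ++ [d]) = mkT I (u ++ v ++ [d]) := by
    rw [hfac]
    simpa using mkT_append_append_congr u [] (mkT_cons_eq_append hind)
  have hw : racSigma I w (unitVecZ d) = racSigma I u (unitVecZ d) := by
    rw [racSigma_eq_of_mkT_append_eq hsym hwd, racSigma_append, Function.comp_apply,
      racSigma_unitVecZ_of_indep hirr hsym hind]
  have hcox' : CoxT I (mkT I (u ++ [d])) :=
    coxT_of_append_right v (by simpa [hfac] using hcox)
  have hx := adapted_racSigma_unitVecZ hsym hcox' (isPrimeWord_of_primeT hirr hprime)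
  intro b
  rw [hw]
  exact ⟨⟨fun hb => by_contra fun hb' => hb (hx.eq_zero b hb'), fun hb => (hx.pos b hb).ne'⟩,
    hx.pos b⟩
end

section
/- For every n ≥ 7, the least common multiple of the integers 1,2,…,n is greater than 2ⁿ. -/
/-!
Nair's argument. For `0 < k ≤ n`, `k * choose n k` divides `lcm(1, …, n)`: by Kummer's theorem
`v_p (choose n k)` counts the carries in `k + (n - k)` at positions `1, …, log_p n`, and no carry
happens at a position `i ≤ v_p k`, so `v_p k + v_p (choose n k) ≤ log_p n`. Applied to
`(2m, m)` and `(2m+1, m+1)`, together with `(m+1) * choose (2m+1) (m+1) = (2m+1) * choose (2m) m`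
and `gcd(m, 2m+1) = 1`, this gives `m (2m+1) choose (2m) m ∣ lcm(1, …, 2m+1)`, which exceeds
`(2m+1) 4^m ≥ 4^(m+1)` once `m ≥ 4`. The cases `n = 7, 8` are checked directly.
-/

open Finset

namespace Nat

theorem factorization_mul_choose_le_log {p n k : ℕ} (hp : p.Prime) (hk : k ≠ 0) (hkn : k ≤ n) :
    (k * n.choose k).factorization p ≤ log p n := by
  have hb : log p n < log p n + 1 := lt_add_one _
  have hkb : k < p ^ (log p n + 1) := hkn.trans_lt (lt_pow_succ_log_self hp.one_lt n)
  have hdisj : Disjoint {i ∈ Ico 1 (log p n + 1) | p ^ i ∣ k}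
      {i ∈ Ico 1 (log p n + 1) | p ^ i ≤ k % p ^ i + (n - k) % p ^ i} := by
    simp +contextual [disjoint_left, dvd_iff_mod_eq_zero, Nat.mod_lt _ (pow_pos hp.pos _)]
  rw [factorization_mul hk (choose_ne_zero hkn), Finsupp.add_apply,
    factorization_eq_card_pow_dvd_of_lt hp (pos_of_ne_zero hk) hkb, factorization_choose hp hkn hb,
    ← card_union_of_disjoint hdisj, ← filter_or]
  exact (card_filter_le ..).trans_eq (card_Ico ..)

theorem mul_choose_dvd_lcmUpto {n k : ℕ} (hk : k ≠ 0) (hkn : k ≤ n) :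
    k * n.choose k ∣ lcmUpto n := by
  rw [← factorization_prime_le_iff_dvd (mul_ne_zero hk (choose_ne_zero hkn)) (lcmUpto_ne_zero n)]
  intro p hp
  rw [factorization_lcmUpto n hp]
  exact factorization_mul_choose_le_log hp hk hkn

theorem lcmUpto_dvd_lcmUpto {m n : ℕ} (h : m ≤ n) : lcmUpto m ∣ lcmUpto n :=
  Finset.lcm_mono (Icc_subset_Icc_right h)

theorem mul_mul_centralBinom_dvd_lcmUpto {m : ℕ} (hm : m ≠ 0) :
    m * ((2 * m + 1) * centralBinom m) ∣ lcmUpto (2 * m + 1) := by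
  have h₁ : m * centralBinom m ∣ lcmUpto (2 * m + 1) :=
    (mul_choose_dvd_lcmUpto hm (by omega)).trans (lcmUpto_dvd_lcmUpto (by omega))
  have h₂ : (2 * m + 1) * centralBinom m ∣ lcmUpto (2 * m + 1) := by
    rw [centralBinom_eq_two_mul_choose, add_one_mul_choose_eq, mul_comm]
    exact mul_choose_dvd_lcmUpto (succ_ne_zero m) (by omega)
  have hcop : Coprime m (2 * m + 1) := by simp
  simpa [lcm_mul_right, hcop.lcm_eq_mul, mul_assoc] using Nat.lcm_dvd h₁ h₂

theorem four_pow_succ_lt_lcmUpto {m : ℕ} (hm : 4 ≤ m) : 4 ^ (m + 1) < lcmUpto (2 * m + 1) :=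
  calc 4 ^ (m + 1) = 4 * 4 ^ m := pow_succ' ..
    _ < (2 * m + 1) * (m * centralBinom m) :=
      Nat.mul_lt_mul_of_le_of_lt (by omega) (four_pow_lt_mul_centralBinom m hm) (by omega)
    _ ≤ lcmUpto (2 * m + 1) := by
      rw [mul_left_comm]
      exact le_of_dvd (lcmUpto_pos _) (mul_mul_centralBinom_dvd_lcmUpto (by omega))

end Nat

/-- For every `n ≥ 7`, the least common multiple of `1, 2, …, n` is greater than `2 ^ n`. -/
theorem two_pow_lt_lcm_Icc (n : ℕ) (hn : 7 ≤ n) :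
    2 ^ n < (Finset.Icc 1 n).lcm id := by
  change 2 ^ n < Nat.lcmUpto n
  rcases le_or_gt n 8 with hn8 | hn8
  · interval_cases n <;> decide
  obtain ⟨m, hm, hmn, hnm⟩ : ∃ m, 4 ≤ m ∧ 2 * m + 1 ≤ n ∧ n ≤ 2 * m + 2 :=
    ⟨(n - 1) / 2, by omega, by omega, by omega⟩
  calc 2 ^ n ≤ 2 ^ (2 * (m + 1)) := Nat.pow_le_pow_right two_pos (by omega)
    _ = 4 ^ (m + 1) := pow_mul ..
    _ < Nat.lcmUpto (2 * m + 1) := Nat.four_pow_succ_lt_lcmUpto hm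
    _ ≤ Nat.lcmUpto n := Nat.le_of_dvd (Nat.lcmUpto_pos n) (Nat.lcmUpto_dvd_lcmUpto hmn)
end
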